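/- arXiv:2404.00574 — 9 statements merged into one kernel-verified Lean document; each statement's English description precedes it below -/
import Mathlib

section
/- Let (a_{n,k}) be a Köthe matrix, let β be an exponent sequence, and let θ : ℕ → ℂ satisfy θ ∈ Λ_∞(β). Assume that for every k ∈ ℕ there exist m ∈ ℕ and C > 0 such that e^{-k β_n} ≤ C · a_{n,m} for all n ∈ ℕ. Then for every k ∈ ℕ there exist m ∈ ℕ and C' > 0 such that ∑_{j=0}^∞ |θ_{j+n}| · e^{k β_j} ≤ C' · a_{n,m} for all n ∈ ℕ (the continuity condition for the Hankel operator H_θ : K(a_{n,k}) → Λ_∞(β)). -/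
/-- If `θ ∈ Λ_∞(β)` and for every `k` there exist `m`, `C > 0` with
`e^{-k β_n} ≤ C a_{n,m}` for all `n`, then the Hankel operator
`H_θ : K(a) → Λ_∞(β)` satisfies the continuity condition. -/
theorem hankel_to_infinite_type_continuous
    (a : ℕ → ℕ → ℝ) (β : ℕ → ℝ) (θ : ℕ → ℂ)
    (ha_nonneg : ∀ n k, 0 ≤ a n k) (ha_mono : ∀ n k, a n k ≤ a n (k + 1))
    (ha_pos : ∀ n, ∃ k, 0 < a n k)
    (hβ_nonneg : ∀ n, 0 ≤ β n) (hβ_mono : Monotone β)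
    (hβ_tendsto : Filter.Tendsto β Filter.atTop Filter.atTop)
    (hθ : ∀ k : ℕ, Summable fun n : ℕ => ‖θ n‖ * Real.exp ((k : ℝ) * β n))
    (hcond : ∀ k : ℕ, ∃ m : ℕ, ∃ C : ℝ, 0 < C ∧
      ∀ n : ℕ, Real.exp (-(k : ℝ) * β n) ≤ C * a n m) :
    ∀ k : ℕ, ∃ m : ℕ, ∃ C' : ℝ, 0 < C' ∧
      ∀ n : ℕ, (∑' j : ℕ, ‖θ (j + n)‖ * Real.exp ((k : ℝ) * β j)) ≤ C' * a n m := by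
  intro k
  obtain ⟨m, C, hC, hCa⟩ := hcond k
  have hS2 : Summable fun i : ℕ => ‖θ i‖ * Real.exp (((2 * k : ℕ) : ℝ) * β i) :=
    hθ (2 * k)
  set S : ℝ := ∑' i : ℕ, ‖θ i‖ * Real.exp (((2 * k : ℕ) : ℝ) * β i) with hSdef
  have hS_nonneg : 0 ≤ S :=
    tsum_nonneg fun i => mul_nonneg (norm_nonneg _) (Real.exp_pos _).le
  refine ⟨m, C * (S + 1), by positivity, fun n => ?_⟩
  -- pointwise bound
  have key : ∀ j : ℕ, ‖θ (j + n)‖ * Real.exp ((k : ℝ) * β j) ≤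
      (‖θ (j + n)‖ * Real.exp (((2 * k : ℕ) : ℝ) * β (j + n))) * Real.exp (-(k : ℝ) * β n) := by
    intro j
    rw [mul_assoc]
    refine mul_le_mul_of_nonneg_left ?_ (norm_nonneg _)
    rw [← Real.exp_add]
    apply Real.exp_le_exp.2
    have h1 : β j ≤ β (j + n) := hβ_mono (Nat.le_add_right j n)
    have h2 : β n ≤ β (j + n) := hβ_mono (Nat.le_add_left n j)
    push_cast
    nlinarith [Nat.cast_nonneg (α := ℝ) k]
  have hgsum : Summable fun j : ℕ =>
      (‖θ (j + n)‖ * Real.exp (((2 * k : ℕ) : ℝ) * β (j + n))) * Real.exp (-(k : ℝ) * β n) := by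
    apply Summable.mul_right
    exact (hS2.comp_injective (add_left_injective n))
  have hfsum : Summable fun j : ℕ => ‖θ (j + n)‖ * Real.exp ((k : ℝ) * β j) := by
    refine Summable.of_nonneg_of_le (fun j => mul_nonneg (norm_nonneg _) (Real.exp_pos _).le)
      key hgsum
  calc (∑' j : ℕ, ‖θ (j + n)‖ * Real.exp ((k : ℝ) * β j))
      ≤ ∑' j : ℕ, (‖θ (j + n)‖ * Real.exp (((2 * k : ℕ) : ℝ) * β (j + n)))
          * Real.exp (-(k : ℝ) * β n) := Summable.tsum_le_tsum key hfsum hgsum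
    _ = (∑' j : ℕ, ‖θ (j + n)‖ * Real.exp (((2 * k : ℕ) : ℝ) * β (j + n)))
          * Real.exp (-(k : ℝ) * β n) := tsum_mul_right
    _ ≤ S * Real.exp (-(k : ℝ) * β n) := by
        refine mul_le_mul_of_nonneg_right ?_ (Real.exp_pos _).le
        exact Summable.tsum_le_tsum_of_inj (fun j => j + n) (add_left_injective n)
          (fun c _ => mul_nonneg (norm_nonneg _) (Real.exp_pos _).le)
          (fun j => le_refl _) (hS2.comp_injective (add_left_injective n)) hS2
    _ ≤ S * (C * a n m) := mul_le_mul_of_nonneg_left (hCa n) hS_nonneg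
    _ ≤ (C * (S + 1)) * a n m := by nlinarith [ha_nonneg n m, hS_nonneg, hC]
end

section
/- Let (a_{n,k}) be a Köthe matrix, let β be an exponent sequence, and let θ : ℕ → ℂ satisfy θ ∈ Λ_∞(β). Assume there exists m ∈ ℕ such that for every k ∈ ℕ there is C > 0 with e^{-k β_n} ≤ C · a_{n,m} for all n ∈ ℕ. Then there exists m ∈ ℕ such that for every k ∈ ℕ there is C' > 0 with ∑_{j=0}^∞ |θ_{j+n}| · e^{k β_j} ≤ C' · a_{n,m} for all n ∈ ℕ (the compactness condition for the Hankel operator H_θ : K(a_{n,k}) → Λ_∞(β): the index m is independent of k). -/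
/-- If `θ ∈ Λ_∞(β)` and there exists `m` such that for every `k` there is
`C > 0` with `e^{-k β_n} ≤ C a_{n,m}` for all `n`, then the Hankel operator
`H_θ : K(a) → Λ_∞(β)` satisfies the compactness condition (the index `m` is
independent of `k`). -/
theorem hankel_to_infinite_type_compact
    (a : ℕ → ℕ → ℝ) (β : ℕ → ℝ) (θ : ℕ → ℂ)
    (ha_nonneg : ∀ n k, 0 ≤ a n k) (ha_mono : ∀ n k, a n k ≤ a n (k + 1))
    (ha_pos : ∀ n, ∃ k, 0 < a n k)
    (hβ_nonneg : ∀ n, 0 ≤ β n) (hβ_mono : Monotone β)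
    (hβ_tendsto : Filter.Tendsto β Filter.atTop Filter.atTop)
    (hθ : ∀ k : ℕ, Summable fun n : ℕ => ‖θ n‖ * Real.exp ((k : ℝ) * β n))
    (hcond : ∃ m : ℕ, ∀ k : ℕ, ∃ C : ℝ, 0 < C ∧
      ∀ n : ℕ, Real.exp (-(k : ℝ) * β n) ≤ C * a n m) :
    ∃ m : ℕ, ∀ k : ℕ, ∃ C' : ℝ, 0 < C' ∧
      ∀ n : ℕ, (∑' j : ℕ, ‖θ (j + n)‖ * Real.exp ((k : ℝ) * β j)) ≤ C' * a n m := by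
  obtain ⟨m, hm⟩ := hcond
  refine ⟨m, fun k => ?_⟩
  obtain ⟨C, hC, hCn⟩ := hm 1
  set S : ℝ := ∑' i : ℕ, ‖θ i‖ * Real.exp (((k + 1 : ℕ) : ℝ) * β i) with hSdef
  have hSnn : 0 ≤ S := tsum_nonneg fun i => by positivity
  refine ⟨(S + 1) * C, by positivity, fun n => ?_⟩
  have hsum2 : Summable fun j : ℕ => ‖θ (j + n)‖ * Real.exp (((k + 1 : ℕ) : ℝ) * β (j + n)) :=
    (hθ (k + 1)).comp_injective (add_left_injective n)
  have hle : ∀ j : ℕ, ‖θ (j + n)‖ * Real.exp ((k : ℝ) * β j) ≤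
      (‖θ (j + n)‖ * Real.exp (((k + 1 : ℕ) : ℝ) * β (j + n))) * Real.exp (-(1 : ℝ) * β n) := by
    intro j
    rw [mul_assoc, ← Real.exp_add]
    refine mul_le_mul_of_nonneg_left (Real.exp_le_exp.2 ?_) (norm_nonneg _)
    push_cast
    have h1 : (k : ℝ) * β j ≤ (k : ℝ) * β (j + n) :=
      mul_le_mul_of_nonneg_left (hβ_mono (Nat.le_add_right j n)) (Nat.cast_nonneg k)
    have h2 : β n ≤ β (j + n) := hβ_mono (Nat.le_add_left n j)
    nlinarith
  have hsumL : Summable fun j : ℕ => ‖θ (j + n)‖ * Real.exp ((k : ℝ) * β j) := by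
    refine Summable.of_nonneg_of_le (fun j => by positivity) hle (hsum2.mul_right _)
  have step1 : (∑' j : ℕ, ‖θ (j + n)‖ * Real.exp ((k : ℝ) * β j)) ≤
      (∑' j : ℕ, ‖θ (j + n)‖ * Real.exp (((k + 1 : ℕ) : ℝ) * β (j + n))) *
        Real.exp (-(1 : ℝ) * β n) := by
    rw [← tsum_mul_right]
    exact Summable.tsum_le_tsum hle hsumL (hsum2.mul_right _)
  have step2 : (∑' j : ℕ, ‖θ (j + n)‖ * Real.exp (((k + 1 : ℕ) : ℝ) * β (j + n))) ≤ S := by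
    refine Summable.tsum_le_tsum_of_inj (fun j => j + n) (add_left_injective n)
      (fun c _ => by positivity) (fun j => le_refl _) hsum2 (hθ (k + 1))
  have hexp : Real.exp (-(1 : ℝ) * β n) ≤ C * a n m := by
    have := hCn n; push_cast at this ⊢; exact this
  calc (∑' j : ℕ, ‖θ (j + n)‖ * Real.exp ((k : ℝ) * β j))
      ≤ S * Real.exp (-(1 : ℝ) * β n) := le_trans step1
        (mul_le_mul_of_nonneg_right step2 (Real.exp_nonneg _))
    _ ≤ S * (C * a n m) := mul_le_mul_of_nonneg_left hexp hSnn
    _ ≤ (S + 1) * C * a n m := by nlinarith [ha_nonneg n m, mul_nonneg hC.le (ha_nonneg n m)]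
end

section
/- Let α and β be exponent sequences and assume there exist A, B > 0 with α_n ≤ A β_n + B for all n ∈ ℕ. Let θ : ℕ → ℂ satisfy θ ∈ Λ_∞(β). Then there exists a positive integer m such that for every k ∈ ℕ there is C > 0 with ∑_{j=0}^∞ |θ_{j+n}| · e^{k β_j} ≤ C · e^{-α_n/m} for all n ∈ ℕ (i.e., the Hankel operator H_θ : Λ_1(α) → Λ_∞(β) is continuous and satisfies the compactness condition, the index m being independent of k). -/
/-!
Since `β` is monotone, `k β_j + β_n ≤ (k + 1) β_{j+n}`, so the `n`-th column of the Hankel matrix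
has `Λ_∞(β)`-weight `∑_j |θ_{j+n}| e^{k β_j}` at most `e^{-β_n} ∑_i |θ_i| e^{(k+1) β_i}`. The growth
condition `α_n ≤ A β_n + B` turns the decay `e^{-β_n}` into `e^B e^{-α_n/m}` for any integer `m ≥ A`.
-/

open Real

lemma add_mul_le_add_one_mul_of_monotone {β : ℕ → ℝ} (hβ : Monotone β) {k : ℝ} (hk : 0 ≤ k)
    (j n : ℕ) : k * β j + β n ≤ (k + 1) * β (j + n) := by
  have hj : β j ≤ β (j + n) := hβ (Nat.le_add_right j n)
  have hn : β n ≤ β (j + n) := hβ (Nat.le_add_left n j)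
  nlinarith

lemma tsum_hankel_column_le {β : ℕ → ℝ} (hβ : Monotone β) (θ : ℕ → ℂ) {k : ℝ} (hk : 0 ≤ k)
    (hθ : Summable fun i => ‖θ i‖ * exp ((k + 1) * β i)) (n : ℕ) :
    ∑' j, ‖θ (j + n)‖ * exp (k * β j) ≤
      exp (-β n) * ∑' i, ‖θ i‖ * exp ((k + 1) * β i) := by
  set g : ℕ → ℝ := fun i => ‖θ i‖ * exp ((k + 1) * β i)
  have hg : ∀ i, 0 ≤ g i := fun i => by positivity
  have hshift_inj : Function.Injective fun j : ℕ => j + n := add_left_injective n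
  have hθ_shift : Summable fun j => g (j + n) := hθ.comp_injective hshift_inj
  have hterm : ∀ j, ‖θ (j + n)‖ * exp (k * β j) ≤ exp (-β n) * g (j + n) := fun j =>
    calc ‖θ (j + n)‖ * exp (k * β j)
        ≤ ‖θ (j + n)‖ * exp ((k + 1) * β (j + n) + -β n) := by
          gcongr
          linarith [add_mul_le_add_one_mul_of_monotone hβ hk j n]
      _ = exp (-β n) * g (j + n) := by
          simp only [g, exp_add]
          ring
  calc ∑' j, ‖θ (j + n)‖ * exp (k * β j)
      ≤ ∑' j, exp (-β n) * g (j + n) :=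
        Summable.tsum_le_tsum hterm
          (.of_nonneg_of_le (fun j => by positivity) hterm (hθ_shift.mul_left _))
          (hθ_shift.mul_left _)
    _ = exp (-β n) * ∑' j, g (j + n) := tsum_mul_left
    _ ≤ exp (-β n) * ∑' i, g i :=
        mul_le_mul_of_nonneg_left (tsum_comp_le_tsum_of_inj hθ hg hshift_inj) (exp_pos _).le

lemma div_le_add_of_le_mul_add {a b A B m : ℝ} (hb : 0 ≤ b) (hB : 0 ≤ B) (hAm : A ≤ m)
    (hm : 1 ≤ m) (h : a ≤ A * b + B) : a / m ≤ b + B := by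
  rw [div_le_iff₀ (by linarith)]
  nlinarith [mul_nonneg (sub_nonneg.2 hAm) hb, mul_nonneg (sub_nonneg.2 hm) hB]

theorem hankel_finite_to_infinite_compact_general
    (α β : ℕ → ℝ) (θ : ℕ → ℂ)
    (hβ_nonneg : ∀ n, 0 ≤ β n) (hβ_mono : Monotone β)
    (hAB : ∃ A B : ℝ, 0 < A ∧ 0 < B ∧ ∀ n : ℕ, α n ≤ A * β n + B)
    (hθ : ∀ k : ℕ, Summable fun n : ℕ => ‖θ n‖ * Real.exp ((k : ℝ) * β n)) :
    ∃ m : ℕ, 0 < m ∧ ∀ k : ℕ, ∃ C : ℝ, 0 < C ∧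
      ∀ n : ℕ, (∑' j : ℕ, ‖θ (j + n)‖ * Real.exp ((k : ℝ) * β j)) ≤
        C * Real.exp (-α n / (m : ℝ)) := by
  obtain ⟨A, B, hA, hB, hαβ⟩ := hAB
  have hm_pos : 0 < ⌈A⌉₊ := Nat.ceil_pos.2 hA
  refine ⟨⌈A⌉₊, hm_pos, fun k => ?_⟩
  set S := ∑' i, ‖θ i‖ * exp ((k + 1 : ℝ) * β i)
  have hS : 0 ≤ S := tsum_nonneg fun i => by positivity
  refine ⟨exp B * (S + 1), by positivity, fun n => ?_⟩
  have hdecay : exp (-β n) ≤ exp B * exp (-α n / ⌈A⌉₊) := by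
    rw [← exp_add, neg_div]
    have := div_le_add_of_le_mul_add (hβ_nonneg n) hB.le (Nat.le_ceil A)
      (by exact_mod_cast hm_pos) (hαβ n)
    gcongr
    linarith
  calc ∑' j, ‖θ (j + n)‖ * exp (k * β j)
      ≤ exp (-β n) * S :=
        tsum_hankel_column_le hβ_mono θ k.cast_nonneg (by exact_mod_cast hθ (k + 1)) n
    _ ≤ exp B * exp (-α n / ⌈A⌉₊) * (S + 1) := by gcongr; linarith
    _ = exp B * (S + 1) * exp (-α n / ⌈A⌉₊) := by ring

/-- If `α_n ≤ A β_n + B` and `θ ∈ Λ_∞(β)`, then the Hankel operator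
`H_θ : Λ_1(α) → Λ_∞(β)` is continuous and satisfies the compactness condition
(the index `m` is independent of `k`). -/
theorem hankel_finite_to_infinite_compact
    (α β : ℕ → ℝ) (θ : ℕ → ℂ)
    (hα_nonneg : ∀ n, 0 ≤ α n) (hα_mono : Monotone α)
    (hα_tendsto : Filter.Tendsto α Filter.atTop Filter.atTop)
    (hβ_nonneg : ∀ n, 0 ≤ β n) (hβ_mono : Monotone β)
    (hβ_tendsto : Filter.Tendsto β Filter.atTop Filter.atTop)
    (hAB : ∃ A B : ℝ, 0 < A ∧ 0 < B ∧ ∀ n : ℕ, α n ≤ A * β n + B)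
    (hθ : ∀ k : ℕ, Summable fun n : ℕ => ‖θ n‖ * Real.exp ((k : ℝ) * β n)) :
    ∃ m : ℕ, 0 < m ∧ ∀ k : ℕ, ∃ C : ℝ, 0 < C ∧
      ∀ n : ℕ, (∑' j : ℕ, ‖θ (j + n)‖ * Real.exp ((k : ℝ) * β j)) ≤
        C * Real.exp (-α n / (m : ℝ)) :=
  hankel_finite_to_infinite_compact_general α β θ hβ_nonneg hβ_mono hAB hθ
end

section
/- Let β be a stable exponent sequence, let (a_{n,k}) be a Köthe matrix, and let θ : ℕ → ℂ satisfy θ ∈ Λ_1(β). Assume that for every positive integer k there exist m ∈ ℕ and C > 0 such that e^{β_n/k} ≤ C · a_{n,m} for all n ∈ ℕ. Then for every positive integer k there exist m ∈ ℕ and C' > 0 such that ∑_{j=0}^∞ |θ_{j+n}| · e^{-β_j/k} ≤ C' · a_{n,m} for all n ∈ ℕ (the continuity condition for the Hankel operator H_θ : K(a_{n,k}) → Λ_1(β)). -/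
/-!
Stability makes `β` quasi-subadditive: `β (j + n) ≤ β (2 max j n) ≤ M (β j + β n)`.
Choosing `k₁ ≥ k M`, this gives `e^{-β_j/k} ≤ e^{-β_{j+n}/k₁} e^{β_n/k}`, so the `n`-th Hankel
column is dominated by `(∑ᵢ |θᵢ| e^{-β_i/k₁}) e^{β_n/k}`, which is finite since `θ ∈ Λ₁(β)`, and
`e^{β_n/k} ≤ C a_{n,m}` by hypothesis.
-/

open Real

lemma Monotone.le_mul_add_of_le_mul_two_mul {β : ℕ → ℝ} (hmono : Monotone β)
    (hnonneg : ∀ n, 0 ≤ β n) {M : ℝ} (hM : 0 ≤ M) (hstable : ∀ n, β (2 * n) ≤ M * β n)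
    (j n : ℕ) : β (j + n) ≤ M * (β j + β n) := by
  have hmax : β (max j n) ≤ β j + β n := by
    rcases le_total j n with h | h
    · rw [max_eq_right h]; linarith [hnonneg j]
    · rw [max_eq_left h]; linarith [hnonneg n]
  calc β (j + n) ≤ β (2 * max j n) := hmono (by omega)
    _ ≤ M * β (max j n) := hstable _
    _ ≤ M * (β j + β n) := mul_le_mul_of_nonneg_left hmax hM

lemma exp_neg_div_le_exp_neg_div_mul_exp_div {x y s M k k₁ : ℝ} (hk : 0 < k) (hM : 0 < M)
    (hk₁ : k * M ≤ k₁) (hs : 0 ≤ s) (hsub : s ≤ M * (x + y)) :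
    exp (-x / k) ≤ exp (-s / k₁) * exp (y / k) := by
  have hkM : 0 < k * M := mul_pos hk hM
  have hdiv : s / k₁ ≤ (x + y) / k :=
    calc s / k₁ ≤ s / (k * M) := div_le_div_of_nonneg_left hs hkM hk₁
      _ ≤ (x + y) / k := by
        rw [div_le_div_iff₀ hkM hk]; nlinarith
  rw [add_div] at hdiv
  rw [← exp_add, exp_le_exp, neg_div, neg_div]
  linarith

lemma tsum_le_tsum_mul_of_le_shift_mul {f g : ℕ → ℝ} (hf : 0 ≤ f) (hg : 0 ≤ g)
    (hgs : Summable g) {c : ℝ} (hc : 0 ≤ c) (n : ℕ) (hfg : ∀ j, f j ≤ g (j + n) * c) :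
    ∑' j, f j ≤ (∑' i, g i) * c := by
  have hshift : Summable fun j => g (j + n) := (summable_nat_add_iff n).2 hgs
  have hbound : Summable fun j => g (j + n) * c := hshift.mul_right c
  calc ∑' j, f j ≤ ∑' j, g (j + n) * c :=
        (hbound.of_nonneg_of_le hf hfg).tsum_le_tsum hfg hbound
    _ = (∑' j, g (j + n)) * c := tsum_mul_right
    _ ≤ (∑' i, g i) * c := mul_le_mul_of_nonneg_right
        (hshift.tsum_le_tsum_of_inj (· + n) (add_left_injective n)
          (fun i _ => hg i) (fun _ => le_rfl) hgs) hc

theorem hankel_to_finite_type_continuous_general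
    (a : ℕ → ℕ → ℝ) (β : ℕ → ℝ) (θ : ℕ → ℂ)
    (hβ_nonneg : ∀ n, 0 ≤ β n) (hβ_mono : Monotone β)
    (hβ_stable : ∃ M : ℝ, 0 < M ∧ ∀ n : ℕ, β (2 * n) ≤ M * β n)
    (hθ : ∀ k : ℕ, 0 < k → Summable fun n : ℕ => ‖θ n‖ * Real.exp (-β n / (k : ℝ)))
    (hcond : ∀ k : ℕ, 0 < k → ∃ m : ℕ, ∃ C : ℝ, 0 < C ∧
      ∀ n : ℕ, Real.exp (β n / (k : ℝ)) ≤ C * a n m) :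
    ∀ k : ℕ, 0 < k → ∃ m : ℕ, ∃ C' : ℝ, 0 < C' ∧
      ∀ n : ℕ, (∑' j : ℕ, ‖θ (j + n)‖ * Real.exp (-β j / (k : ℝ))) ≤ C' * a n m := by
  intro k hk
  obtain ⟨M, hM, hstable⟩ := hβ_stable
  obtain ⟨m, C, hC, hCa⟩ := hcond k hk
  have hk' : (0 : ℝ) < k := by exact_mod_cast hk
  obtain ⟨k₁, hk₁⟩ := exists_nat_gt ((k : ℝ) * M)
  have hk₁_pos : 0 < k₁ := by exact_mod_cast (mul_pos hk' hM).trans hk₁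
  set g : ℕ → ℝ := fun i => ‖θ i‖ * exp (-β i / k₁)
  have hg : 0 ≤ g := fun i => by positivity
  set S := ∑' i, g i
  have hS : 0 ≤ S := tsum_nonneg hg
  refine ⟨m, (S + 1) * C, by positivity, fun n => ?_⟩
  have hpt (j : ℕ) : ‖θ (j + n)‖ * exp (-β j / k) ≤ g (j + n) * exp (β n / k) := by
    rw [mul_assoc]
    exact mul_le_mul_of_nonneg_left
      (exp_neg_div_le_exp_neg_div_mul_exp_div hk' hM hk₁.le (hβ_nonneg _)
        (hβ_mono.le_mul_add_of_le_mul_two_mul hβ_nonneg hM.le hstable j n))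
      (norm_nonneg _)
  calc ∑' j, ‖θ (j + n)‖ * exp (-β j / k) ≤ S * exp (β n / k) :=
        tsum_le_tsum_mul_of_le_shift_mul (fun j => by positivity) hg (hθ k₁ hk₁_pos)
          (exp_pos _).le n hpt
    _ ≤ S * (C * a n m) := mul_le_mul_of_nonneg_left (hCa n) hS
    _ ≤ (S + 1) * C * a n m := by
        have : 0 ≤ C * a n m := (exp_pos _).le.trans (hCa n)
        nlinarith

/-- If `β` is a stable exponent sequence, `θ ∈ Λ_1(β)`, and for every
positive integer `k` there are `m`, `C > 0` with `e^{β_n/k} ≤ C a_{n,m}`, then the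
Hankel operator `H_θ : K(a) → Λ_1(β)` satisfies the continuity condition. -/
theorem hankel_to_finite_type_continuous
    (a : ℕ → ℕ → ℝ) (β : ℕ → ℝ) (θ : ℕ → ℂ)
    (ha_nonneg : ∀ n k, 0 ≤ a n k) (ha_mono : ∀ n k, a n k ≤ a n (k + 1))
    (ha_pos : ∀ n, ∃ k, 0 < a n k)
    (hβ_nonneg : ∀ n, 0 ≤ β n) (hβ_mono : Monotone β)
    (hβ_tendsto : Filter.Tendsto β Filter.atTop Filter.atTop)
    (hβ_stable : ∃ M : ℝ, 0 < M ∧ ∀ n : ℕ, β (2 * n) ≤ M * β n)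
    (hθ : ∀ k : ℕ, 0 < k → Summable fun n : ℕ => ‖θ n‖ * Real.exp (-β n / (k : ℝ)))
    (hcond : ∀ k : ℕ, 0 < k → ∃ m : ℕ, ∃ C : ℝ, 0 < C ∧
      ∀ n : ℕ, Real.exp (β n / (k : ℝ)) ≤ C * a n m) :
    ∀ k : ℕ, 0 < k → ∃ m : ℕ, ∃ C' : ℝ, 0 < C' ∧
      ∀ n : ℕ, (∑' j : ℕ, ‖θ (j + n)‖ * Real.exp (-β j / (k : ℝ))) ≤ C' * a n m :=
  hankel_to_finite_type_continuous_general a β θ hβ_nonneg hβ_mono hβ_stable hθ hcond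
end

section
/- Let β be a stable exponent sequence, let (a_{n,k}) be a Köthe matrix, and let θ : ℕ → ℂ satisfy θ ∈ Λ_1(β). Assume there exists m ∈ ℕ such that for every positive integer k there is C > 0 with e^{β_n/k} ≤ C · a_{n,m} for all n ∈ ℕ. Then there exists m ∈ ℕ such that for every positive integer k there is C' > 0 with ∑_{j=0}^∞ |θ_{j+n}| · e^{-β_j/k} ≤ C' · a_{n,m} for all n ∈ ℕ (the compactness condition for the Hankel operator H_θ : K(a_{n,k}) → Λ_1(β): the index m is independent of k). -/
/-!
Stability gives the quasi-subadditivity `β (j + n) ≤ M (β j + β n)`. Choosing `K ≥ M k`, this yields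
`e^{-β_j/k} ≤ e^{β_n/k} e^{-β_{j+n}/K}`, so the `n`-th Hankel column sum at level `k` is at most
`e^{β_n/k} ∑_i |θ_i| e^{-β_i/K}`, and the hypothesis bounds `e^{β_n/k}` by `C a_{n,m}` with the
same `m` for every `k`.
-/

open Real

lemma add_le_mul_add_of_stable {β : ℕ → ℝ} {M : ℝ} (hβ_nonneg : ∀ n, 0 ≤ β n)
    (hβ_mono : Monotone β) (hM : 0 ≤ M) (hβ_stable : ∀ n, β (2 * n) ≤ M * β n) (j n : ℕ) :
    β (j + n) ≤ M * (β j + β n) :=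
  calc β (j + n) ≤ β (2 * max j n) := hβ_mono (by omega)
    _ ≤ M * β (max j n) := hβ_stable _
    _ ≤ M * (β j + β n) := by
      rw [hβ_mono.map_max]
      gcongr
      exact max_le_add_of_nonneg (hβ_nonneg j) (hβ_nonneg n)

lemma exp_neg_div_le_exp_mul_exp_neg_add_div {β : ℕ → ℝ} {M k K : ℝ} (hβ_nonneg : ∀ n, 0 ≤ β n)
    (hβ_add : ∀ j n, β (j + n) ≤ M * (β j + β n)) (hk : 0 < k) (hK : 0 < K) (hMK : M * k ≤ K)
    (j n : ℕ) :
    exp (-β j / k) ≤ exp (β n / k) * exp (-β (j + n) / K) := by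
  rw [← exp_add, exp_le_exp]
  have hsum : 0 ≤ β j + β n := add_nonneg (hβ_nonneg j) (hβ_nonneg n)
  have hshift : β (j + n) / K ≤ (β j + β n) / k := by
    rw [div_le_div_iff₀ hK hk]
    calc β (j + n) * k ≤ (β j + β n) * (M * k) := by nlinarith [hβ_add j n]
      _ ≤ (β j + β n) * K := by gcongr
  rw [add_div] at hshift
  linarith [neg_div k (β j), neg_div K (β (j + n))]

lemma tsum_shift_mul_le {x w v : ℕ → ℝ} {c : ℝ} (n : ℕ) (hx : ∀ i, 0 ≤ x i) (hw : ∀ j, 0 ≤ w j)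
    (hv : ∀ i, 0 ≤ v i) (hc : 0 ≤ c) (hwv : ∀ j, w j ≤ c * v (j + n))
    (hs : Summable fun i => x i * v i) :
    ∑' j, x (j + n) * w j ≤ c * ∑' i, x i * v i := by
  have hs_shift : Summable fun j => x (j + n) * v (j + n) :=
    hs.comp_injective (add_left_injective n)
  have hpoint : ∀ j, x (j + n) * w j ≤ c * (x (j + n) * v (j + n)) := fun j => by
    rw [mul_left_comm]
    exact mul_le_mul_of_nonneg_left (hwv j) (hx _)
  have hs_left : Summable fun j => x (j + n) * w j :=
    (hs_shift.mul_left c).of_nonneg_of_le (fun j => mul_nonneg (hx _) (hw j)) hpoint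
  calc ∑' j, x (j + n) * w j ≤ ∑' j, c * (x (j + n) * v (j + n)) :=
        hs_left.tsum_le_tsum hpoint (hs_shift.mul_left c)
    _ = c * ∑' j, x (j + n) * v (j + n) := tsum_mul_left
    _ ≤ c * ∑' i, x i * v i := by
      refine mul_le_mul_of_nonneg_left ?_ hc
      exact hs_shift.tsum_le_tsum_of_inj (· + n) (add_left_injective n)
        (fun i _ => mul_nonneg (hx i) (hv i)) (fun _ => le_rfl) hs

theorem hankel_to_finite_type_compact_general
    (a : ℕ → ℕ → ℝ) (β : ℕ → ℝ) (θ : ℕ → ℂ)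
    (hβ_nonneg : ∀ n, 0 ≤ β n) (hβ_mono : Monotone β)
    (hβ_stable : ∃ M : ℝ, 0 < M ∧ ∀ n : ℕ, β (2 * n) ≤ M * β n)
    (hθ : ∀ k : ℕ, 0 < k → Summable fun n : ℕ => ‖θ n‖ * Real.exp (-β n / (k : ℝ)))
    (hcond : ∃ m : ℕ, ∀ k : ℕ, 0 < k → ∃ C : ℝ, 0 < C ∧
      ∀ n : ℕ, Real.exp (β n / (k : ℝ)) ≤ C * a n m) :
    ∃ m : ℕ, ∀ k : ℕ, 0 < k → ∃ C' : ℝ, 0 < C' ∧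
      ∀ n : ℕ, (∑' j : ℕ, ‖θ (j + n)‖ * Real.exp (-β j / (k : ℝ))) ≤ C' * a n m := by
  obtain ⟨M, hM, hM_stable⟩ := hβ_stable
  have hβ_add := add_le_mul_add_of_stable hβ_nonneg hβ_mono hM.le hM_stable
  obtain ⟨m, hm⟩ := hcond
  refine ⟨m, fun k hk => ?_⟩
  obtain ⟨C, hC, hCa⟩ := hm k hk
  set K : ℕ := ⌈M⌉₊ * k
  have hK : 0 < K := Nat.mul_pos (Nat.ceil_pos.2 hM) hk
  have hMK : M * k ≤ K := by
    simp only [K, Nat.cast_mul]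
    gcongr
    exact Nat.le_ceil M
  set S := ∑' i, ‖θ i‖ * exp (-β i / K)
  have hS : 0 ≤ S := tsum_nonneg fun i => by positivity
  refine ⟨C * (S + 1), by positivity, fun n => ?_⟩
  have ha : 0 < a n m := pos_of_mul_pos_right ((exp_pos _).trans_le (hCa n)) hC.le
  calc ∑' j, ‖θ (j + n)‖ * exp (-β j / k) ≤ exp (β n / k) * S :=
        tsum_shift_mul_le n (fun _ => norm_nonneg _) (fun _ => (exp_pos _).le)
          (fun _ => (exp_pos _).le) (exp_pos _).le
          (exp_neg_div_le_exp_mul_exp_neg_add_div hβ_nonneg hβ_add (by positivity)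
            (by positivity) hMK · n)
          (hθ K hK)
    _ ≤ C * a n m * S := by gcongr; exact hCa n
    _ ≤ C * (S + 1) * a n m := by
      rw [mul_right_comm]
      gcongr
      linarith

/-- If `β` is a stable exponent sequence, `θ ∈ Λ_1(β)`, and there exists
`m` such that for every positive integer `k` there is `C > 0` with
`e^{β_n/k} ≤ C a_{n,m}`, then the Hankel operator `H_θ : K(a) → Λ_1(β)` satisfies the
compactness condition (the index `m` is independent of `k`). -/
theorem hankel_to_finite_type_compact
    (a : ℕ → ℕ → ℝ) (β : ℕ → ℝ) (θ : ℕ → ℂ)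
    (ha_nonneg : ∀ n k, 0 ≤ a n k) (ha_mono : ∀ n k, a n k ≤ a n (k + 1))
    (ha_pos : ∀ n, ∃ k, 0 < a n k)
    (hβ_nonneg : ∀ n, 0 ≤ β n) (hβ_mono : Monotone β)
    (hβ_tendsto : Filter.Tendsto β Filter.atTop Filter.atTop)
    (hβ_stable : ∃ M : ℝ, 0 < M ∧ ∀ n : ℕ, β (2 * n) ≤ M * β n)
    (hθ : ∀ k : ℕ, 0 < k → Summable fun n : ℕ => ‖θ n‖ * Real.exp (-β n / (k : ℝ)))
    (hcond : ∃ m : ℕ, ∀ k : ℕ, 0 < k → ∃ C : ℝ, 0 < C ∧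
      ∀ n : ℕ, Real.exp (β n / (k : ℝ)) ≤ C * a n m) :
    ∃ m : ℕ, ∀ k : ℕ, 0 < k → ∃ C' : ℝ, 0 < C' ∧
      ∀ n : ℕ, (∑' j : ℕ, ‖θ (j + n)‖ * Real.exp (-β j / (k : ℝ))) ≤ C' * a n m :=
  hankel_to_finite_type_compact_general a β θ hβ_nonneg hβ_mono hβ_stable hθ hcond
end

section
/- Let α be a stable exponent sequence, let (b_{n,k}) be a Köthe matrix, and let θ : ℕ → ℂ belong to the dual of Λ_∞(α), i.e., there exist m₀ ∈ ℕ and C₀ > 0 with |θ_n| ≤ C₀ e^{m₀ α_n} for all n. Assume that for every m ∈ ℕ the sequence (e^{m α_n})_n belongs to K(b_{n,k}), i.e., ∑_{n=0}^∞ e^{m α_n} b_{n,k} < ∞ for all k, m ∈ ℕ. Then there exists d ∈ ℕ such that for every k ∈ ℕ there is C > 0 with ∑_{j=0}^∞ |θ_{j+n}| · b_{j,k} ≤ C · e^{d α_n} for all n ∈ ℕ (i.e., the Hankel operator H_θ : Λ_∞(α) → K(b_{n,k}) is continuous and satisfies the compactness condition, the index d being independent of k). -/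
/-!
Stability makes `α` subadditive up to the constant `M`: `α (j + n) ≤ α (2 max j n) ≤ M (α j + α n)`.
Hence the growth bound `‖θ i‖ ≤ C₀ e^{m₀ α i}` splits as
`‖θ (j + n)‖ ≤ C₀ e^{d α j} e^{d α n}` with `d = ⌈m₀ M⌉`, and the `n`-th Hankel column is dominated
by `C₀ e^{d α n}` times the convergent series `∑ⱼ e^{d α j} b_{j,k}`.
-/

open Real

section StableExponent

variable {α : ℕ → ℝ} {M : ℝ}

theorem apply_add_le_of_stable (hα_nonneg : ∀ n, 0 ≤ α n) (hα_mono : Monotone α) (hM : 0 ≤ M)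
    (hα_stable : ∀ n, α (2 * n) ≤ M * α n) (j n : ℕ) :
    α (j + n) ≤ M * (α j + α n) :=
  calc α (j + n) ≤ α (2 * max j n) := hα_mono (by omega)
    _ ≤ M * α (max j n) := hα_stable _
    _ ≤ M * (α j + α n) := by
      gcongr
      rcases le_total j n with h | h <;> simp [h, hα_nonneg]

theorem exp_mul_apply_add_le_of_stable (hα_nonneg : ∀ n, 0 ≤ α n) (hα_mono : Monotone α)
    (hM : 0 ≤ M) (hα_stable : ∀ n, α (2 * n) ≤ M * α n) {m : ℕ} {d : ℝ} (hd : m * M ≤ d)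
    (j n : ℕ) : exp (m * α (j + n)) ≤ exp (d * α j) * exp (d * α n) := by
  rw [← exp_add, exp_le_exp, ← mul_add]
  calc (m : ℝ) * α (j + n) ≤ m * (M * (α j + α n)) := by
        gcongr
        exact apply_add_le_of_stable hα_nonneg hα_mono hM hα_stable j n
    _ = (m * M) * (α j + α n) := by ring
    _ ≤ d * (α j + α n) := by
        gcongr
        exact add_nonneg (hα_nonneg j) (hα_nonneg n)

end StableExponent

theorem tsum_le_mul_tsum_of_le_mul {f g : ℕ → ℝ} {c : ℝ} (hf : ∀ j, 0 ≤ f j)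
    (hfg : ∀ j, f j ≤ c * g j) (hg : Summable g) : ∑' j, f j ≤ c * ∑' j, g j := by
  rw [← tsum_mul_left]
  exact (hg.mul_left c).of_nonneg_of_le hf hfg |>.tsum_le_tsum hfg (hg.mul_left c)

theorem hankel_from_infinite_type_compact_general
    (α : ℕ → ℝ) (b : ℕ → ℕ → ℝ) (θ : ℕ → ℂ)
    (hα_nonneg : ∀ n, 0 ≤ α n) (hα_mono : Monotone α)
    (hα_stable : ∃ M : ℝ, 0 < M ∧ ∀ n : ℕ, α (2 * n) ≤ M * α n)
    (hb_nonneg : ∀ n k, 0 ≤ b n k)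
    (hθ : ∃ m₀ : ℕ, ∃ C₀ : ℝ, 0 < C₀ ∧ ∀ n : ℕ, ‖θ n‖ ≤ C₀ * Real.exp ((m₀ : ℝ) * α n))
    (hcond : ∀ m k : ℕ, Summable fun n : ℕ => Real.exp ((m : ℝ) * α n) * b n k) :
    ∃ d : ℕ, ∀ k : ℕ, ∃ C : ℝ, 0 < C ∧
      ∀ n : ℕ, (∑' j : ℕ, ‖θ (j + n)‖ * b j k) ≤ C * Real.exp ((d : ℝ) * α n) := by
  obtain ⟨m₀, C₀, hC₀, hθ_le⟩ := hθ
  obtain ⟨M, hM, hα_stable⟩ := hα_stable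
  set d : ℕ := ⌈(m₀ : ℝ) * M⌉₊
  have hθ_split (j n : ℕ) : ‖θ (j + n)‖ ≤ C₀ * exp (d * α n) * exp (d * α j) :=
    calc ‖θ (j + n)‖ ≤ C₀ * exp (m₀ * α (j + n)) := hθ_le _
      _ ≤ C₀ * (exp (d * α j) * exp (d * α n)) := by
          gcongr
          exact exp_mul_apply_add_le_of_stable hα_nonneg hα_mono hM.le hα_stable
            (Nat.le_ceil _) j n
      _ = C₀ * exp (d * α n) * exp (d * α j) := by ring
  refine ⟨d, fun k => ?_⟩
  set S := ∑' j, exp (d * α j) * b j k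
  have hS : 0 ≤ S := tsum_nonneg fun j => mul_nonneg (exp_pos _).le (hb_nonneg _ _)
  refine ⟨C₀ * (S + 1), by positivity, fun n => ?_⟩
  calc ∑' j, ‖θ (j + n)‖ * b j k ≤ C₀ * exp (d * α n) * S := by
        refine tsum_le_mul_tsum_of_le_mul (fun j => by have := hb_nonneg j k; positivity)
          (fun j => ?_) (hcond d k)
        rw [← mul_assoc]
        exact mul_le_mul_of_nonneg_right (hθ_split j n) (hb_nonneg j k)
    _ ≤ C₀ * (S + 1) * exp (d * α n) := by
        rw [mul_right_comm]
        gcongr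
        exact le_add_of_nonneg_right zero_le_one

/-- Let `α` be a stable exponent sequence and `θ` in the dual of
`Λ_∞(α)`. If `(e^{m α_n})_n ∈ K(b)` for every `m`, then the Hankel operator
`H_θ : Λ_∞(α) → K(b)` is continuous and satisfies the compactness condition
(the index `d` is independent of `k`). -/
theorem hankel_from_infinite_type_compact
    (α : ℕ → ℝ) (b : ℕ → ℕ → ℝ) (θ : ℕ → ℂ)
    (hα_nonneg : ∀ n, 0 ≤ α n) (hα_mono : Monotone α)
    (hα_tendsto : Filter.Tendsto α Filter.atTop Filter.atTop)
    (hα_stable : ∃ M : ℝ, 0 < M ∧ ∀ n : ℕ, α (2 * n) ≤ M * α n)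
    (hb_nonneg : ∀ n k, 0 ≤ b n k) (hb_mono : ∀ n k, b n k ≤ b n (k + 1))
    (hb_pos : ∀ n, ∃ k, 0 < b n k)
    (hθ : ∃ m₀ : ℕ, ∃ C₀ : ℝ, 0 < C₀ ∧ ∀ n : ℕ, ‖θ n‖ ≤ C₀ * Real.exp ((m₀ : ℝ) * α n))
    (hcond : ∀ m k : ℕ, Summable fun n : ℕ => Real.exp ((m : ℝ) * α n) * b n k) :
    ∃ d : ℕ, ∀ k : ℕ, ∃ C : ℝ, 0 < C ∧
      ∀ n : ℕ, (∑' j : ℕ, ‖θ (j + n)‖ * b j k) ≤ C * Real.exp ((d : ℝ) * α n) :=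
  hankel_from_infinite_type_compact_general α b θ hα_nonneg hα_mono hα_stable hb_nonneg hθ hcond
end

section
/- Let α and β be exponent sequences such that Λ_1(β) is nuclear (i.e., for every positive integer k there exists an integer l > k with ∑_{n=0}^∞ e^{β_n(1/l − 1/k)} < ∞). Let θ : ℕ → ℂ satisfy |θ_n| ≤ C₀ e^{-α_n/m₀} for all n, for some positive integer m₀ and C₀ > 0 (θ belongs to the dual of Λ_1(α)). Then there exists a positive integer m such that for every positive integer k there is C > 0 with ∑_{j=0}^∞ |θ_{j+n}| · e^{-β_j/k} ≤ C · e^{-α_n/m} for all n ∈ ℕ (i.e., the Hankel operator H_θ : Λ_1(α) → Λ_1(β) is continuous and satisfies the compactness condition, the index m being independent of k). -/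
/-! One may take `m = m₀`: since `α` is monotone, every entry `θ (j + n)` of the `n`-th
column is bounded by `C₀ e^{-α n / m₀}`, and nuclearity of `Λ_1(β)` makes the weights
`e^{-β j / k}` summable, so `C = C₀ ∑ⱼ e^{-β j / k}` works for every `k`. -/

open Real

lemma summable_exp_neg_div_of_summable_exp_mul {β : ℕ → ℝ} (hβ : ∀ n, 0 ≤ β n) {k l : ℝ}
    (hl : 0 ≤ l) (h : Summable fun n => exp (β n * (1 / l - 1 / k))) :
    Summable fun n => exp (-β n / k) := by
  refine h.of_nonneg_of_le (fun n => (exp_pos _).le) fun n => exp_le_exp.mpr ?_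
  have hl' : 0 ≤ 1 / l := one_div_nonneg.mpr hl
  calc -β n / k = β n * (0 - 1 / k) := by ring
    _ ≤ β n * (1 / l - 1 / k) := by gcongr; exact hβ n

lemma norm_shift_le_of_norm_le_exp {α : ℕ → ℝ} (hα : Monotone α) {θ : ℕ → ℂ} {C m : ℝ}
    (hm : 0 ≤ m) (hθ : ∀ n, ‖θ n‖ ≤ C * exp (-α n / m)) (j n : ℕ) :
    ‖θ (j + n)‖ ≤ C * exp (-α n / m) := by
  have hC : 0 ≤ C := nonneg_of_mul_nonneg_left ((norm_nonneg _).trans (hθ 0)) (exp_pos _)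
  calc ‖θ (j + n)‖ ≤ C * exp (-α (j + n) / m) := hθ _
    _ ≤ C * exp (-α n / m) := by
      have := hα (Nat.le_add_left n j)
      gcongr

lemma tsum_norm_mul_le_of_norm_le {x : ℕ → ℂ} {w : ℕ → ℝ} {A : ℝ} (hw : Summable w)
    (hw_nonneg : ∀ j, 0 ≤ w j) (hx : ∀ j, ‖x j‖ ≤ A) :
    ∑' j, ‖x j‖ * w j ≤ A * ∑' j, w j := by
  have hterm : ∀ j, ‖x j‖ * w j ≤ A * w j := fun j =>
    mul_le_mul_of_nonneg_right (hx j) (hw_nonneg j)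
  have hsum : Summable fun j => ‖x j‖ * w j :=
    (hw.mul_left A).of_nonneg_of_le (fun j => mul_nonneg (norm_nonneg _) (hw_nonneg j)) hterm
  rw [← tsum_mul_left]
  exact hsum.tsum_le_tsum hterm (hw.mul_left A)

theorem hankel_finite_to_nuclear_finite_compact_general
    (α β : ℕ → ℝ) (θ : ℕ → ℂ)
    (hα_mono : Monotone α)
    (hβ_nonneg : ∀ n, 0 ≤ β n)
    (hβ_nuclear : ∀ k : ℕ, 0 < k → ∃ l : ℕ, k < l ∧
      Summable fun n : ℕ => Real.exp (β n * (1 / (l : ℝ) - 1 / (k : ℝ))))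
    (hθ : ∃ m₀ : ℕ, 0 < m₀ ∧ ∃ C₀ : ℝ, 0 < C₀ ∧
      ∀ n : ℕ, ‖θ n‖ ≤ C₀ * Real.exp (-α n / (m₀ : ℝ))) :
    ∃ m : ℕ, 0 < m ∧ ∀ k : ℕ, 0 < k → ∃ C : ℝ, 0 < C ∧
      ∀ n : ℕ, (∑' j : ℕ, ‖θ (j + n)‖ * Real.exp (-β j / (k : ℝ))) ≤
        C * Real.exp (-α n / (m : ℝ)) := by
  obtain ⟨m₀, hm₀, C₀, hC₀, hθb⟩ := hθ
  refine ⟨m₀, hm₀, fun k hk => ?_⟩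
  obtain ⟨l, -, hsum⟩ := hβ_nuclear k hk
  have hS : Summable fun j => exp (-β j / k) :=
    summable_exp_neg_div_of_summable_exp_mul hβ_nonneg l.cast_nonneg hsum
  have hS_pos : 0 < ∑' j, exp (-β j / k) :=
    hS.tsum_pos (fun j => (exp_pos _).le) 0 (exp_pos _)
  refine ⟨C₀ * ∑' j, exp (-β j / k), by positivity, fun n => ?_⟩
  calc ∑' j, ‖θ (j + n)‖ * exp (-β j / k)
      ≤ C₀ * exp (-α n / m₀) * ∑' j, exp (-β j / k) :=
        tsum_norm_mul_le_of_norm_le hS (fun j => (exp_pos _).le)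
          (norm_shift_le_of_norm_le_exp hα_mono m₀.cast_nonneg hθb · n)
    _ = C₀ * (∑' j, exp (-β j / k)) * exp (-α n / m₀) := by ring

/-- Let `α`, `β` be exponent sequences with `Λ_1(β)` nuclear. Then for
every `θ` in the dual of `Λ_1(α)`, the Hankel operator `H_θ : Λ_1(α) → Λ_1(β)` is
continuous and satisfies the compactness condition (the index `m` is independent
of `k`). -/
theorem hankel_finite_to_nuclear_finite_compact
    (α β : ℕ → ℝ) (θ : ℕ → ℂ)
    (hα_nonneg : ∀ n, 0 ≤ α n) (hα_mono : Monotone α)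
    (hα_tendsto : Filter.Tendsto α Filter.atTop Filter.atTop)
    (hβ_nonneg : ∀ n, 0 ≤ β n) (hβ_mono : Monotone β)
    (hβ_tendsto : Filter.Tendsto β Filter.atTop Filter.atTop)
    (hβ_nuclear : ∀ k : ℕ, 0 < k → ∃ l : ℕ, k < l ∧
      Summable fun n : ℕ => Real.exp (β n * (1 / (l : ℝ) - 1 / (k : ℝ))))
    (hθ : ∃ m₀ : ℕ, 0 < m₀ ∧ ∃ C₀ : ℝ, 0 < C₀ ∧
      ∀ n : ℕ, ‖θ n‖ ≤ C₀ * Real.exp (-α n / (m₀ : ℝ))) :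
    ∃ m : ℕ, 0 < m ∧ ∀ k : ℕ, 0 < k → ∃ C : ℝ, 0 < C ∧
      ∀ n : ℕ, (∑' j : ℕ, ‖θ (j + n)‖ * Real.exp (-β j / (k : ℝ))) ≤
        C * Real.exp (-α n / (m : ℝ)) :=
  hankel_finite_to_nuclear_finite_compact_general α β θ hα_mono hβ_nonneg hβ_nuclear hθ
end

section
/- Let α be an exponent sequence and let θ : ℕ → ℂ satisfy θ ∈ Λ_∞(α). Then the backward shift operator B is mean ergodic on Λ_∞(α) with Cesàro means converging to 0: for every k ∈ ℕ, the k-th seminorm of the n-th Cesàro mean of B applied to θ tends to 0, i.e., lim_{n→∞} ∑_{j=0}^∞ | (1/n) ∑_{m=1}^{n} θ_{j+m} | · e^{k α_j} = 0. -/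
/-!
Put `S j = ‖θ j‖ w j` with the weight `w j = exp (k α j)`, which is nonnegative and monotone.
Since `w j ≤ w (j + m)`, the weighted norm of `B^[n] θ` is at most the average over
`m = 1, …, n` of the tails `∑_{i ≥ m} S i`. These tails tend to `0` because `S` is summable,
hence so do their Cesàro averages.
-/

open Filter Finset Topology

theorem Filter.Tendsto.cesaro_Icc {u : ℕ → ℝ} {l : ℝ} (h : Tendsto u atTop (𝓝 l)) :
    Tendsto (fun n : ℕ => (n : ℝ)⁻¹ * ∑ m ∈ Icc 1 n, u m) atTop (𝓝 l) := by
  convert (h.comp (tendsto_add_atTop_nat 1)).cesaro using 2 with n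
  rw [← Ico_add_one_right_eq_Icc, sum_Ico_eq_sum_range]
  simp only [Nat.add_sub_cancel, Function.comp_apply, add_comm]

section WeightedCesaro

variable {𝕜 : Type*} [RCLike 𝕜] {w : ℕ → ℝ} (θ : ℕ → 𝕜)

theorem norm_cesaro_shift_mul_le (hw_nonneg : ∀ j, 0 ≤ w j) (hw_mono : Monotone w) (n j : ℕ) :
    ‖(n : 𝕜)⁻¹ * ∑ m ∈ Icc 1 n, θ (j + m)‖ * w j ≤
      (n : ℝ)⁻¹ * ∑ m ∈ Icc 1 n, ‖θ (j + m)‖ * w (j + m) := by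
  rw [norm_mul, norm_inv, RCLike.norm_natCast, mul_assoc]
  gcongr (n : ℝ)⁻¹ * ?_
  calc ‖∑ m ∈ Icc 1 n, θ (j + m)‖ * w j
      ≤ (∑ m ∈ Icc 1 n, ‖θ (j + m)‖) * w j := by
        gcongr
        exacts [hw_nonneg j, norm_sum_le _ _]
    _ = ∑ m ∈ Icc 1 n, ‖θ (j + m)‖ * w j := sum_mul ..
    _ ≤ ∑ m ∈ Icc 1 n, ‖θ (j + m)‖ * w (j + m) := by
      gcongr with m; exact hw_mono (Nat.le_add_right j m)

theorem tsum_norm_cesaro_shift_mul_le (hw_nonneg : ∀ j, 0 ≤ w j) (hw_mono : Monotone w)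
    (hθ : Summable fun j => ‖θ j‖ * w j) (n : ℕ) :
    ∑' j, ‖(n : 𝕜)⁻¹ * ∑ m ∈ Icc 1 n, θ (j + m)‖ * w j ≤
      (n : ℝ)⁻¹ * ∑ m ∈ Icc 1 n, ∑' j, ‖θ (j + m)‖ * w (j + m) := by
  have htail (m : ℕ) : Summable fun j => ‖θ (j + m)‖ * w (j + m) :=
    (summable_nat_add_iff m).2 hθ
  have hbound := norm_cesaro_shift_mul_le θ hw_nonneg hw_mono n
  have hupper : Summable fun j => (n : ℝ)⁻¹ * ∑ m ∈ Icc 1 n, ‖θ (j + m)‖ * w (j + m) :=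
    (summable_sum fun m _ => htail m).mul_left _
  have hlower := hupper.of_nonneg_of_le (fun j => mul_nonneg (norm_nonneg _) (hw_nonneg j)) hbound
  calc ∑' j, ‖(n : 𝕜)⁻¹ * ∑ m ∈ Icc 1 n, θ (j + m)‖ * w j
      ≤ ∑' j, (n : ℝ)⁻¹ * ∑ m ∈ Icc 1 n, ‖θ (j + m)‖ * w (j + m) :=
        hlower.tsum_le_tsum hbound hupper
    _ = (n : ℝ)⁻¹ * ∑ m ∈ Icc 1 n, ∑' j, ‖θ (j + m)‖ * w (j + m) := by
      rw [tsum_mul_left, Summable.tsum_finsetSum fun m _ => htail m]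

theorem tendsto_tsum_norm_cesaro_shift_mul_zero (hw_nonneg : ∀ j, 0 ≤ w j) (hw_mono : Monotone w)
    (hθ : Summable fun j => ‖θ j‖ * w j) :
    Tendsto (fun n : ℕ => ∑' j, ‖(n : 𝕜)⁻¹ * ∑ m ∈ Icc 1 n, θ (j + m)‖ * w j)
      atTop (𝓝 0) :=
  tendsto_of_tendsto_of_tendsto_of_le_of_le tendsto_const_nhds
    (tendsto_sum_nat_add fun j => ‖θ j‖ * w j).cesaro_Icc
    (fun _ => tsum_nonneg fun j => mul_nonneg (norm_nonneg _) (hw_nonneg j))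
    (tsum_norm_cesaro_shift_mul_le θ hw_nonneg hw_mono hθ)

end WeightedCesaro

theorem backward_shift_cesaro_tendsto_zero_general
    (α : ℕ → ℝ) (θ : ℕ → ℂ)
    (hα_mono : Monotone α)
    (hθ : ∀ k : ℕ, Summable fun n : ℕ => ‖θ n‖ * Real.exp ((k : ℝ) * α n)) :
    ∀ k : ℕ, Filter.Tendsto
      (fun n : ℕ => ∑' j : ℕ,
        ‖(n : ℂ)⁻¹ * ∑ m ∈ Finset.Icc 1 n, θ (j + m)‖ * Real.exp ((k : ℝ) * α j))
      Filter.atTop (nhds 0) := fun k =>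
  tendsto_tsum_norm_cesaro_shift_mul_zero θ (fun _ => (Real.exp_pos _).le)
    (fun _ _ hij => Real.exp_le_exp.2 (mul_le_mul_of_nonneg_left (hα_mono hij) k.cast_nonneg))
    (hθ k)

/-- For `θ ∈ Λ_∞(α)`, the Cesàro means of the backward shift operator
applied to `θ` converge to `0` in every seminorm of `Λ_∞(α)`. -/
theorem backward_shift_cesaro_tendsto_zero
    (α : ℕ → ℝ) (θ : ℕ → ℂ)
    (hα_nonneg : ∀ n, 0 ≤ α n) (hα_mono : Monotone α)
    (hα_tendsto : Filter.Tendsto α Filter.atTop Filter.atTop)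
    (hθ : ∀ k : ℕ, Summable fun n : ℕ => ‖θ n‖ * Real.exp ((k : ℝ) * α n)) :
    ∀ k : ℕ, Filter.Tendsto
      (fun n : ℕ => ∑' j : ℕ,
        ‖(n : ℂ)⁻¹ * ∑ m ∈ Finset.Icc 1 n, θ (j + m)‖ * Real.exp ((k : ℝ) * α j))
      Filter.atTop (nhds 0) :=
  backward_shift_cesaro_tendsto_zero_general α θ hα_mono hθ
end

section
/- Let α be an exponent sequence. Then the forward shift operator F is Cesàro bounded on Λ_1(α): for every θ ∈ Λ_1(α), every positive integer k, and every positive integer n, ∑_{j=0}^∞ | (1/n) ∑_{m=1}^{n} θ̃_{j-m} | · e^{-α_j/k} ≤ ∑_{j=0}^∞ |θ_j| · e^{-α_j/(2k)}, where θ̃_i := θ_i for i ≥ 0 and θ̃_i := 0 for i < 0 (so the k-th seminorm of every Cesàro mean F^{[n]}θ is bounded by the 2k-th seminorm of θ, uniformly in n). -/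
/-!
Since `α` is monotone and nonnegative, `e^{-α_j/k} ≤ e^{-α_i/(2k)}` whenever `i ≤ j`, so the
`k`-weighted sum of `|F^m θ|` is at most the `2k`-weighted sum of `|θ|`, which the shift leaves
unchanged. Averaging over `m = 1, …, n` with the triangle inequality bounds the Cesàro mean.
-/

open Finset

/-- The power `F^m` of the forward shift. -/
def forwardShift {M : Type*} [Zero M] (m : ℕ) (θ : ℕ → M) (j : ℕ) : M :=
  if m ≤ j then θ (j - m) else 0

theorem hasSum_forwardShift {M : Type*} [AddCommMonoid M] [TopologicalSpace M]
    {u : ℕ → M} {a : M} (hu : HasSum u a) (m : ℕ) : HasSum (forwardShift m u) a := by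
  have hinj : Function.Injective (· + m) := add_left_injective m
  have hcomp : forwardShift m u ∘ (· + m) = u := by
    funext i
    simp [forwardShift]
  refine (hinj.hasSum_iff fun j hj => ?_).1 (by rwa [hcomp])
  exact if_neg fun hmj => hj ⟨j - m, Nat.sub_add_cancel hmj⟩

theorem tsum_le_of_le_finset_average {ι : Type*} {s : Finset ι} (hs : s.Nonempty)
    {f : ℕ → ℝ} {g : ι → ℕ → ℝ} {a : ℝ} (hf : 0 ≤ f)
    (hfg : ∀ j, f j ≤ (#s : ℝ)⁻¹ * ∑ m ∈ s, g m j) (hg : ∀ m, HasSum (g m) a) :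
    ∑' j, f j ≤ a := by
  have hsum : HasSum (fun j => (#s : ℝ)⁻¹ * ∑ m ∈ s, g m j) a := by
    have hcard : (#s : ℝ) ≠ 0 := by exact_mod_cast hs.card_ne_zero
    have := (hasSum_sum (s := s) fun m _ => hg m).mul_left (#s : ℝ)⁻¹
    rwa [sum_const, nsmul_eq_mul, inv_mul_cancel_left₀ hcard] at this
  exact hasSum_le hfg (Summable.of_nonneg_of_le hf hfg hsum.summable).hasSum hsum

theorem norm_forwardShift_mul_le {θ : ℕ → ℂ} {w v : ℕ → ℝ}
    (hwv : ∀ i j, i ≤ j → w j ≤ v i) (m j : ℕ) :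
    ‖forwardShift m θ j‖ * w j ≤ forwardShift m (fun i => ‖θ i‖ * v i) j := by
  unfold forwardShift
  split_ifs with hmj
  · exact mul_le_mul_of_nonneg_left (hwv _ _ (Nat.sub_le j m)) (norm_nonneg _)
  · simp

theorem norm_finset_average_forwardShift_mul_le {ι : Type*} (s : Finset ι) (shift : ι → ℕ)
    {θ : ℕ → ℂ} {w v : ℕ → ℝ} (hw : 0 ≤ w) (hwv : ∀ i j, i ≤ j → w j ≤ v i) (j : ℕ) :
    ‖(#s : ℂ)⁻¹ * ∑ m ∈ s, forwardShift (shift m) θ j‖ * w j ≤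
      (#s : ℝ)⁻¹ * ∑ m ∈ s, forwardShift (shift m) (fun i => ‖θ i‖ * v i) j := by
  rw [norm_mul, norm_inv, Complex.norm_natCast, mul_assoc]
  gcongr
  calc ‖∑ m ∈ s, forwardShift (shift m) θ j‖ * w j
      ≤ ∑ m ∈ s, ‖forwardShift (shift m) θ j‖ * w j := by
        rw [← sum_mul]
        exact mul_le_mul_of_nonneg_right (norm_sum_le _ _) (hw j)
    _ ≤ _ := sum_le_sum fun m _ => norm_forwardShift_mul_le hwv _ j

theorem exp_neg_div_le_exp_neg_div_two_mul {α : ℕ → ℝ} (hα_nonneg : ∀ n, 0 ≤ α n)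
    (hα_mono : Monotone α) {k : ℝ} (hk : 0 < k) {i j : ℕ} (hij : i ≤ j) :
    Real.exp (-α j / k) ≤ Real.exp (-α i / (2 * k)) := by
  have hαi := hα_nonneg i
  have hαij := hα_mono hij
  rw [Real.exp_le_exp, div_le_div_iff₀ hk (by positivity)]
  nlinarith

theorem forward_shift_cesaro_bounded_general
    (α : ℕ → ℝ)
    (hα_nonneg : ∀ n, 0 ≤ α n) (hα_mono : Monotone α) :
    ∀ θ : ℕ → ℂ,
      (∀ k : ℕ, 0 < k → Summable fun n : ℕ => ‖θ n‖ * Real.exp (-α n / (k : ℝ))) →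
      ∀ k : ℕ, 0 < k → ∀ n : ℕ, 0 < n →
        (∑' j : ℕ, ‖(n : ℂ)⁻¹ * ∑ m ∈ Finset.Icc 1 n, (if m ≤ j then θ (j - m) else 0)‖ *
            Real.exp (-α j / (k : ℝ))) ≤
          ∑' j : ℕ, ‖θ j‖ * Real.exp (-α j / ((2 * k : ℕ) : ℝ)) := by
  intro θ hθ k hk n hn
  have hcard : #(Icc 1 n) = n := by simp
  have hweight : ∀ i j, i ≤ j →
      Real.exp (-α j / (k : ℝ)) ≤ Real.exp (-α i / ((2 * k : ℕ) : ℝ)) := fun i j hij => by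
    push_cast
    exact exp_neg_div_le_exp_neg_div_two_mul hα_nonneg hα_mono (by positivity) hij
  have hmean := norm_finset_average_forwardShift_mul_le (Icc 1 n) id
    (θ := θ) (fun _ => (Real.exp_pos _).le) hweight
  rw [hcard] at hmean
  exact tsum_le_of_le_finset_average (nonempty_Icc.2 hn) (fun j => by positivity)
    (by rwa [hcard]) fun m => hasSum_forwardShift (hθ (2 * k) (by omega)).hasSum m

/-- The forward shift operator is Cesàro bounded on `Λ_1(α)`: the `k`-th
seminorm of every Cesàro mean `F^{[n]} θ` is bounded by the `2k`-th seminorm of `θ`,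
uniformly in `n`.  Here `θ̃_{j-m}` is taken to be `0` when `m > j`. -/
theorem forward_shift_cesaro_bounded
    (α : ℕ → ℝ)
    (hα_nonneg : ∀ n, 0 ≤ α n) (hα_mono : Monotone α)
    (hα_tendsto : Filter.Tendsto α Filter.atTop Filter.atTop) :
    ∀ θ : ℕ → ℂ,
      (∀ k : ℕ, 0 < k → Summable fun n : ℕ => ‖θ n‖ * Real.exp (-α n / (k : ℝ))) →
      ∀ k : ℕ, 0 < k → ∀ n : ℕ, 0 < n →
        (∑' j : ℕ, ‖(n : ℂ)⁻¹ * ∑ m ∈ Finset.Icc 1 n, (if m ≤ j then θ (j - m) else 0)‖ *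
            Real.exp (-α j / (k : ℝ))) ≤
          ∑' j : ℕ, ‖θ j‖ * Real.exp (-α j / ((2 * k : ℕ) : ℝ)) :=
  forward_shift_cesaro_bounded_general α hα_nonneg hα_mono
end
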